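/- Let G = (V,E) be a finite simple graph with m edges, let k ≥ 2 be an integer, and let G' be the k-stretch of G. Let A ⊆ E be an acyclic edge subset of G. Then Σ_{A' ∈ 𝔽(G'), φ(A') = A} w^{|A'|} = w^{k·|A|} · ((w+1)^k − w^k)^{m−|A|}, as polynomials in w, where φ(A') is the set of edges e of G all of whose k replacing path-edges belong to A'. -/

import Mathlib

open scoped Classical

/-- An edge subset is acyclic (a forest) if the spanning subgraph `(V, A)` has no cycle. -/
def IsForestEdgeSet {V : Type*} (A : Finset (Sym2 V)) : Prop :=
  (SimpleGraph.fromEdgeSet (A : Set (Sym2 V))).IsAcyclic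

/-- The `k`-stretch `G'` of `G`: every edge `e` of `G` (with endpoints `(p e).1, (p e).2`)
is replaced by a path with `k` edges through the `k - 1` new internal vertices
`(e, 0), …, (e, k-2)`. -/
def stretchGraph {V : Type*} (G : SimpleGraph V) (k : ℕ) (p : G.edgeSet → V × V) :
    SimpleGraph (V ⊕ (G.edgeSet × Fin (k - 1))) :=
  SimpleGraph.fromRel (fun x y =>
    match x, y with
    | Sum.inl u, Sum.inr (e, i) =>
        (i.val = 0 ∧ u = (p e).1) ∨ (i.val = k - 2 ∧ u = (p e).2)
    | Sum.inr (e, i), Sum.inr (f, j) => e = f ∧ i.val + 1 = j.val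
    | _, _ => False)

/-- The set of `k` edges of the `k`-stretch `G'` forming the path that replaces the edge
`e` of `G`. -/
noncomputable def pathEdges {V : Type*} (G : SimpleGraph V) (k : ℕ) (hk : 2 ≤ k)
    (p : G.edgeSet → V × V) (e : G.edgeSet) :
    Finset (Sym2 (V ⊕ (G.edgeSet × Fin (k - 1)))) :=
  insert s(Sum.inl (p e).1, Sum.inr (e, (⟨0, by omega⟩ : Fin (k - 1))))
    (insert s(Sum.inl (p e).2, Sum.inr (e, (⟨k - 2, by omega⟩ : Fin (k - 1))))
      ((Finset.univ : Finset (Fin (k - 2))).image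
        (fun i =>
          s(Sum.inr (e, (⟨i.val, by have := i.isLt; omega⟩ : Fin (k - 1))),
            (Sum.inr (e, (⟨i.val + 1, by have := i.isLt; omega⟩ : Fin (k - 1)))
              : V ⊕ (G.edgeSet × Fin (k - 1)))))))

/-- The projection `φ` from edge subsets of the `k`-stretch `G'` to edge subsets of `G`:
`φ(A')` consists of those edges `e` of `G` all of whose `k` replacing path-edges belong
to `A'`. -/
noncomputable def stretchProj {V : Type*} [Fintype V] (G : SimpleGraph V) (k : ℕ)
    (hk : 2 ≤ k) (p : G.edgeSet → V × V)
    (A' : Finset (Sym2 (V ⊕ (G.edgeSet × Fin (k - 1))))) : Finset (Sym2 V) :=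
  (Finset.univ.filter (fun e : G.edgeSet => pathEdges G k hk p e ⊆ A')).image
    (fun e => (e : Sym2 V))

/-!
The edge set of the `k`-stretch is the disjoint union of the `k`-edge paths `P e` replacing the
edges `e` of `G`. When `A` is a forest, every `A' ⊆ E(G')` with `φ(A') = A` is automatically a
forest: each edge of `A'` is a bridge, witnessed by a 2-colouring that is constant on all other
edges of `A'`. For an edge on the path of `e ∈ A`, colour `V` by the side of the cut of the forest
`A` at `e` and cut every other incomplete path at a missing edge; for an edge on the path of
`e ∉ A`, colour the stretch of that path between it and a missing edge. Hence the fiber of `A` is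
a product over `e` of independent choices of `A' ∩ P e`: all of `P e` if `e ∈ A`, with weight
`w ^ k`, and any proper subset otherwise, with total weight `(w + 1) ^ k - w ^ k`.
-/

open Finset SimpleGraph

namespace SimpleGraph

variable {α β : Type*} {H : SimpleGraph α}

theorem Reachable.apply_eq_of_forall_adj {c : α → β} (hc : ∀ u v, H.Adj u v → c u = c v)
    {x y : α} (h : H.Reachable x y) : c x = c y := by
  obtain ⟨w⟩ := h
  induction w with
  | nil => rfl
  | cons hadj _ ih => exact (hc _ _ hadj).trans ih

theorem isBridge_of_map_isDiag {e : Sym2 α} (c : α → β)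
    (hc : ∀ z ∈ H.edgeSet, z ≠ e → (z.map c).IsDiag) (he : ¬ (e.map c).IsDiag) :
    H.IsBridge e := by
  induction e using Sym2.ind with
  | h x y =>
  refine isBridge_iff.2 fun hr => he ?_
  rw [Sym2.map_mk, Sym2.mk_isDiag_iff]
  refine hr.apply_eq_of_forall_adj fun u v huv => ?_
  rw [deleteEdges_adj, Set.mem_singleton_iff] at huv
  simpa using hc _ huv.1 huv.2

theorem isAcyclic_of_forall_exists_map_isDiag
    (h : ∀ e ∈ H.edgeSet, ∃ c : α → Bool,
      (∀ z ∈ H.edgeSet, z ≠ e → (z.map c).IsDiag) ∧ ¬ (e.map c).IsDiag) :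
    H.IsAcyclic :=
  isAcyclic_iff_forall_isBridge.2 fun e he =>
    let ⟨c, hc, hce⟩ := h e he
    isBridge_of_map_isDiag c hc hce

end SimpleGraph

namespace Finset

variable {ι α R : Type*}

theorem sum_filter_powerset_biUnion [Fintype ι] [DecidableEq α] [CommSemiring R]
    (P : ι → Finset α) (hP : Pairwise fun i j => Disjoint (P i) (P j))
    (q : ι → Finset α → Prop) [∀ i, DecidablePred (q i)] (w : R) :
    ∑ A ∈ (univ.biUnion P).powerset.filter (fun A => ∀ i, q i (A ∩ P i)), w ^ A.card
      = ∏ i, ∑ T ∈ (P i).powerset.filter (q i), w ^ T.card := by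
  have biUnion_inter_eq {A : Finset α} (hA : A ⊆ univ.biUnion P) :
      univ.biUnion (fun i => A ∩ P i) = A := by
    rw [← inter_biUnion, inter_eq_left.2 hA]
  have biUnion_inter_eq_self {g : ι → Finset α} (hg : ∀ i, g i ⊆ P i) (i : ι) :
      univ.biUnion g ∩ P i = g i := by
    ext x
    simp only [mem_inter, mem_biUnion, mem_univ, true_and]
    refine ⟨fun ⟨⟨j, hj⟩, hi⟩ => ?_, fun hi => ⟨⟨i, hi⟩, hg i hi⟩⟩
    obtain rfl : j = i := by_contra fun hji => disjoint_left.1 (hP hji) (hg j hj) hi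
    exact hj
  rw [prod_univ_sum]
  refine sum_nbij' (fun A i => A ∩ P i) (fun g => univ.biUnion g) ?_ ?_ ?_ ?_ ?_
  · intro A hA
    simp only [mem_filter, mem_powerset, Fintype.mem_piFinset] at hA ⊢
    exact fun i => ⟨inter_subset_right, hA.2 i⟩
  · intro g hg
    simp only [mem_filter, mem_powerset, Fintype.mem_piFinset] at hg ⊢
    refine ⟨biUnion_mono fun i _ => (hg i).1, fun i => ?_⟩
    rw [biUnion_inter_eq_self (fun i => (hg i).1)]
    exact (hg i).2
  · intro A hA
    exact biUnion_inter_eq (mem_powerset.1 (mem_filter.1 hA).1)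
  · intro g hg
    simp only [Fintype.mem_piFinset, mem_filter, mem_powerset] at hg
    exact funext (biUnion_inter_eq_self fun i => (hg i).1)
  · intro A hA
    rw [prod_pow_eq_pow_sum, ← card_biUnion (fun i _ j _ hij =>
      (hP hij).mono inter_subset_right inter_subset_right),
      biUnion_inter_eq (mem_powerset.1 (mem_filter.1 hA).1)]

theorem sum_filter_powerset_eq_iff [DecidableEq α] [CommRing R] (S : Finset α) (b : Prop)
    [Decidable b] (w : R) :
    ∑ T ∈ S.powerset.filter (fun T => T = S ↔ b), w ^ T.card
      = if b then w ^ S.card else (w + 1) ^ S.card - w ^ S.card := by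
  by_cases hb : b
  · simp [hb, filter_eq']
  · have : S.powerset.filter (fun T => T = S ↔ b) = S.powerset.erase S := by
      ext T
      simp [hb, and_comm]
    rw [if_neg hb, this, sum_erase_eq_sub (mem_powerset_self S), ← sum_pow_mul_eq_add_pow]
    simp

theorem prod_ite_mem_of_subset [DecidableEq α] [CommMonoid R] {s t : Finset α} (h : t ⊆ s)
    (a b : R) :
    ∏ x ∈ s, (if x ∈ t then a else b) = a ^ t.card * b ^ (s.card - t.card) := by
  rw [prod_ite, prod_const, prod_const, filter_mem_eq_inter, inter_eq_right.2 h,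
    filter_notMem_eq_sdiff, card_sdiff_of_subset h]

end Finset

section Stretch

variable {V : Type*} {G : SimpleGraph V} {k : ℕ} {p : G.edgeSet → V × V}

variable (G k p) in
/-- The `i`-th vertex, `0 ≤ i ≤ k`, on the path replacing `e`; junk for `i > k`. -/
def pathVertex (e : G.edgeSet) (i : ℕ) : V ⊕ (G.edgeSet × Fin (k - 1)) :=
  if h₀ : i = 0 then .inl (p e).1
  else if h : i < k then .inr (e, ⟨i - 1, by omega⟩) else .inl (p e).2

variable (G k p) in
def pathEdge (e : G.edgeSet) (i : ℕ) : Sym2 (V ⊕ (G.edgeSet × Fin (k - 1))) :=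
  s(pathVertex G k p e i, pathVertex G k p e (i + 1))

theorem fst_ne_snd_of_mk_eq {e : G.edgeSet} (h : s((p e).1, (p e).2) = e) : (p e).1 ≠ (p e).2 :=
  (G.mem_edgeSet.1 (h ▸ e.2)).ne

@[simp]
theorem pathVertex_zero (e : G.edgeSet) : pathVertex G k p e 0 = .inl (p e).1 := rfl

theorem pathVertex_succ (e : G.edgeSet) (i : Fin (k - 1)) :
    pathVertex G k p e (i + 1) = .inr (e, i) := by
  simp [pathVertex, show (i : ℕ) + 1 < k by omega]

theorem pathVertex_self (hk : k ≠ 0) (e : G.edgeSet) : pathVertex G k p e k = .inl (p e).2 := by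
  simp [pathVertex, hk]

theorem pathVertex_sumElim {β : Type*} (c₀ : V → β) (col : G.edgeSet → ℕ → β) {e : G.edgeSet}
    (h₀ : col e 0 = c₀ (p e).1) (hk : col e k = c₀ (p e).2) {i : ℕ} (hi : i ≤ k) :
    Sum.elim c₀ (fun x => col x.1 (x.2 + 1)) (pathVertex G k p e i) = col e i := by
  unfold pathVertex
  split_ifs with h0 hik
  · rw [h0, Sum.elim_inl, h₀]
  · rw [Sum.elim_inr, Nat.sub_add_cancel (Nat.one_le_iff_ne_zero.2 h0)]
  · rw [Sum.elim_inl, ← hk, show i = k by omega]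

theorem pathVertex_injOn {e : G.edgeSet} (hne : (p e).1 ≠ (p e).2) {i j : ℕ} (hi : i ≤ k)
    (hj : j ≤ k) (h : pathVertex G k p e i = pathVertex G k p e j) : i = j := by
  unfold pathVertex at h
  split_ifs at h <;> simp_all <;> omega

theorem eq_of_pathVertex_eq_inr {e f : G.edgeSet} {l : ℕ} {x : Fin (k - 1)}
    (h : pathVertex G k p f l = .inr (e, x)) : f = e := by
  unfold pathVertex at h
  split_ifs at h
  exact (Prod.ext_iff.1 (Sum.inr_injective h)).1

theorem eq_and_eq_of_pathEdge_eq (hk : 2 ≤ k) {e f : G.edgeSet} (hne : (p e).1 ≠ (p e).2)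
    {i j : ℕ} (hi : i < k) (hj : j < k) (h : pathEdge G k p e i = pathEdge G k p f j) :
    e = f ∧ i = j := by
  -- Since `k ≥ 2`, every path edge has an endpoint inside the path.
  obtain ⟨l, hl, hl0, hlk⟩ : ∃ l, (l = i ∨ l = i + 1) ∧ l ≠ 0 ∧ l < k := by
    rcases Nat.eq_zero_or_pos i with rfl | hi0
    · exact ⟨1, by simp, by omega⟩
    · exact ⟨i, by simp, by omega, hi⟩
  have hmem : pathVertex G k p e l ∈ pathEdge G k p f j := by
    rw [← h]
    rcases hl with rfl | rfl <;> simp [pathEdge]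
  obtain rfl : f = e := by
    rw [pathEdge, Sym2.mem_iff, pathVertex, dif_neg hl0, dif_pos hlk] at hmem
    exact hmem.elim (fun h => eq_of_pathVertex_eq_inr h.symm)
      (fun h => eq_of_pathVertex_eq_inr h.symm)
  refine ⟨rfl, ?_⟩
  rcases Sym2.eq_iff.1 h with ⟨h1, -⟩ | ⟨h1, h2⟩
  · exact pathVertex_injOn hne hi.le hj.le h1
  · have := pathVertex_injOn hne hi.le (by omega) h1
    have := pathVertex_injOn hne (by omega) hj.le h2
    omega

theorem pathEdge_zero (e : G.edgeSet) {i : Fin (k - 1)} (hi : (i : ℕ) = 0) :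
    pathEdge G k p e 0 = s(.inl (p e).1, .inr (e, i)) := by
  rw [pathEdge, pathVertex_zero, ← pathVertex_succ e i, hi]

theorem pathEdge_pred (e : G.edgeSet) {i : Fin (k - 1)} (hi : (i : ℕ) = k - 2) :
    pathEdge G k p e (k - 1) = s(.inl (p e).2, .inr (e, i)) := by
  rw [pathEdge, Sym2.eq_swap, Nat.sub_add_cancel (by omega), pathVertex_self (by omega),
    ← pathVertex_succ e i, hi, show k - 2 + 1 = k - 1 by omega]

theorem pathEdge_succ (e : G.edgeSet) {i j : Fin (k - 1)} (hij : (i : ℕ) + 1 = j) :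
    pathEdge G k p e (i + 1) = s(.inr (e, i), .inr (e, j)) := by
  rw [pathEdge, pathVertex_succ, hij, pathVertex_succ]

theorem stretchGraph_adj_pathVertex (hk : 2 ≤ k) {e : G.edgeSet} (hne : (p e).1 ≠ (p e).2)
    {i : ℕ} (hi : i < k) :
    (stretchGraph G k p).Adj (pathVertex G k p e i) (pathVertex G k p e (i + 1)) := by
  refine (fromRel_adj _ _ _).2 ⟨fun h => by simpa using pathVertex_injOn hne hi.le hi h, ?_⟩
  unfold pathVertex
  split_ifs <;> simp_all <;> omega

theorem exists_pathEdge_eq_of_adj (hk : 2 ≤ k) {u v : V ⊕ (G.edgeSet × Fin (k - 1))}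
    (h : (stretchGraph G k p).Adj u v) : ∃ e, ∃ i < k, pathEdge G k p e i = s(u, v) := by
  have of_inl_inr {u : V} {e : G.edgeSet} {i : Fin (k - 1)}
      (h : i.val = 0 ∧ u = (p e).1 ∨ i.val = k - 2 ∧ u = (p e).2) :
      ∃ f, ∃ j < k, pathEdge G k p f j = s(.inl u, .inr (e, i)) := by
    rcases h with ⟨hi, rfl⟩ | ⟨hi, rfl⟩
    · exact ⟨e, 0, by omega, pathEdge_zero e hi⟩
    · exact ⟨e, k - 1, by omega, pathEdge_pred e hi⟩
  have of_inr_inr {e : G.edgeSet} {i j : Fin (k - 1)} (hij : (i : ℕ) + 1 = j) :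
      ∃ f, ∃ l < k, pathEdge G k p f l = s(.inr (e, i), .inr (e, j)) :=
    ⟨e, i + 1, by omega, pathEdge_succ e hij⟩
  rw [stretchGraph, fromRel_adj] at h
  rcases u with u | ⟨e, i⟩ <;> rcases v with v | ⟨f, j⟩ <;> simp at h
  · exact of_inl_inr h
  · rw [Sym2.eq_swap]
    exact of_inl_inr h
  · rcases h.2 with ⟨rfl, hij⟩ | ⟨rfl, hij⟩
    · exact of_inr_inr hij
    · rw [Sym2.eq_swap]
      exact of_inr_inr hij

theorem mem_edgeSet_stretchGraph (hk : 2 ≤ k) (hne : ∀ e, (p e).1 ≠ (p e).2)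
    {z : Sym2 (V ⊕ (G.edgeSet × Fin (k - 1)))} :
    z ∈ (stretchGraph G k p).edgeSet ↔ ∃ e, ∃ i < k, pathEdge G k p e i = z := by
  refine ⟨fun hz => ?_, fun ⟨e, i, hi, hz⟩ => hz ▸ stretchGraph_adj_pathVertex hk (hne e) hi⟩
  induction z using Sym2.ind with
  | h u v => exact exists_pathEdge_eq_of_adj hk hz

theorem pathEdges_eq_image (hk : 2 ≤ k) (e : G.edgeSet) :
    pathEdges G k hk p e = (range k).image (pathEdge G k p e) := by
  ext z
  simp only [pathEdges, mem_insert, mem_image, mem_univ, true_and, mem_range]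
  constructor
  · rintro (rfl | rfl | ⟨l, rfl⟩)
    · exact ⟨0, by omega, pathEdge_zero e rfl⟩
    · exact ⟨k - 1, by omega, pathEdge_pred e rfl⟩
    · exact ⟨l + 1, by omega, pathEdge_succ e (i := ⟨l, by omega⟩) rfl⟩
  · rintro ⟨_ | l, hi, rfl⟩
    · exact .inl (pathEdge_zero e rfl)
    · by_cases hl : l + 2 < k
      · exact .inr (.inr ⟨⟨l, by omega⟩, (pathEdge_succ e (i := ⟨l, by omega⟩) rfl).symm⟩)
      · rw [show l + 1 = k - 1 by omega]
        exact .inr (.inl (pathEdge_pred e rfl))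

theorem card_pathEdges (hk : 2 ≤ k) {e : G.edgeSet} (hne : (p e).1 ≠ (p e).2) :
    (pathEdges G k hk p e).card = k := by
  rw [pathEdges_eq_image, card_image_of_injOn, card_range]
  exact fun i hi j hj h =>
    (eq_and_eq_of_pathEdge_eq hk hne (mem_range.1 hi) (mem_range.1 hj) h).2

theorem pairwise_disjoint_pathEdges (hk : 2 ≤ k) (hne : ∀ e, (p e).1 ≠ (p e).2) :
    Pairwise fun e f => Disjoint (pathEdges G k hk p e) (pathEdges G k hk p f) := by
  intro e f hef
  simp only [pathEdges_eq_image, Finset.disjoint_left, mem_image, mem_range]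
  rintro _ ⟨i, hi, rfl⟩ ⟨j, hj, h⟩
  exact hef (eq_and_eq_of_pathEdge_eq hk (hne e) hi hj h.symm).1

theorem edgeFinset_stretchGraph [Fintype V] (hk : 2 ≤ k) (hne : ∀ e, (p e).1 ≠ (p e).2) :
    (stretchGraph G k p).edgeFinset = univ.biUnion (pathEdges G k hk p) := by
  ext z
  simp [mem_edgeSet_stretchGraph hk hne, pathEdges_eq_image]

variable (k p) in
/-- `col f i` is the colour of `pathVertex G k p f i`. Such a colouring certifies that
`pathEdge G k p e j` is a bridge of `A'`. -/
structure SeparatingColoring (A' : Set (Sym2 (V ⊕ (G.edgeSet × Fin (k - 1)))))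
    (e : G.edgeSet) (j : ℕ) where
  base : V → Bool
  col : G.edgeSet → ℕ → Bool
  col_zero : ∀ f, col f 0 = base (p f).1
  col_last : ∀ f, col f k = base (p f).2
  col_succ : ∀ f, ∀ l < k, pathEdge G k p f l ∈ A' → (f, l) ≠ (e, j) → col f l = col f (l + 1)
  col_ne : col e j ≠ col e (j + 1)

namespace SeparatingColoring

variable {A' : Set (Sym2 (V ⊕ (G.edgeSet × Fin (k - 1))))} {e : G.edgeSet} {j : ℕ}

def toFun (c : SeparatingColoring k p A' e j) : V ⊕ (G.edgeSet × Fin (k - 1)) → Bool :=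
  Sum.elim c.base fun x => c.col x.1 (x.2 + 1)

theorem map_pathEdge (c : SeparatingColoring k p A' e j) (f : G.edgeSet) {l : ℕ} (hl : l < k) :
    (pathEdge G k p f l).map c.toFun = s(c.col f l, c.col f (l + 1)) := by
  rw [pathEdge, Sym2.map_mk, toFun, pathVertex_sumElim _ _ (c.col_zero f) (c.col_last f) hl.le,
    pathVertex_sumElim _ _ (c.col_zero f) (c.col_last f) hl]

theorem map_isDiag (c : SeparatingColoring k p A' e j) (hk : 2 ≤ k)
    (hne : ∀ e, (p e).1 ≠ (p e).2) (hA' : A' ⊆ (stretchGraph G k p).edgeSet)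
    {z : Sym2 (V ⊕ (G.edgeSet × Fin (k - 1)))} (hz : z ∈ A') (hze : z ≠ pathEdge G k p e j) :
    (z.map c.toFun).IsDiag := by
  obtain ⟨f, l, hl, rfl⟩ := (mem_edgeSet_stretchGraph hk hne).1 (hA' hz)
  rw [c.map_pathEdge f hl, Sym2.mk_isDiag_iff]
  exact c.col_succ f l hl hz (by rintro ⟨rfl, rfl⟩; exact hze rfl)

theorem not_map_isDiag (c : SeparatingColoring k p A' e j) (hj : j < k) :
    ¬ ((pathEdge G k p e j).map c.toFun).IsDiag := by
  rw [c.map_pathEdge e hj, Sym2.mk_isDiag_iff]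
  exact c.col_ne

/-- Colour the vertices strictly between the `j`-th and the missing `j'`-th edge. -/
theorem nonempty_of_pathEdge_notMem (hj : j < k) {j' : ℕ} (hj' : j' < k) (hjj' : j ≠ j')
    (hj'A : pathEdge G k p e j' ∉ A') : Nonempty (SeparatingColoring k p A' e j) :=
  ⟨{ base _ := false
     col f i := decide (f = e ∧ min j j' < i ∧ i ≤ max j j')
     col_zero := by simp
     col_last := by simp; omega
     col_succ f l hl hlA hfl := by
       by_cases hfe : f = e
       · subst hfe
         have : l ≠ j := fun h => hfl (by rw [h])
         have : l ≠ j' := fun h => hj'A (h ▸ hlA)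
         simp only [true_and, decide_eq_decide]
         omega
       · simp [hfe]
     col_ne := by simp; omega }⟩

/-- Colour `V` by reachability from `(p e).1` in `A` without `e`, and cut the path of every edge
outside `A` at an edge missing from `A'`. -/
theorem nonempty_of_mem (hp : ∀ f : G.edgeSet, s((p f).1, (p f).2) = f) {A : Set (Sym2 V)}
    (hA : (fromEdgeSet A).IsAcyclic)
    (hA' : ∀ f : G.edgeSet, (∀ i < k, pathEdge G k p f i ∈ A') → (f : Sym2 V) ∈ A)
    (he : (e : Sym2 V) ∈ A) (hj : j < k) : Nonempty (SeparatingColoring k p A' e j) := by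
  have hcut (f : G.edgeSet) :
      ∃ d < k, (f = e → d = j) ∧ (pathEdge G k p f d ∈ A' → (f : Sym2 V) ∈ A) := by
    by_cases hf : (f : Sym2 V) ∈ A
    · exact ⟨j, hj, fun _ => rfl, fun _ => hf⟩
    · obtain ⟨d, hd, hdA⟩ : ∃ d < k, pathEdge G k p f d ∉ A' := by
        by_contra! h
        exact hf (hA' f h)
      exact ⟨d, hd, fun hfe => (hf (hfe ▸ he)).elim, fun h => (hdA h).elim⟩
  choose d hdk hde hdA using hcut
  set H := (fromEdgeSet A).deleteEdges {(e : Sym2 V)}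
  have hadj (f : G.edgeSet) (hf : (f : Sym2 V) ∈ A) (hfe : f ≠ e) : H.Adj (p f).1 (p f).2 := by
    rw [deleteEdges_adj, fromEdgeSet_adj, hp f, Set.mem_singleton_iff]
    exact ⟨⟨hf, fst_ne_snd_of_mk_eq (hp f)⟩, fun h => hfe (Subtype.ext h)⟩
  have hbridge : ¬ H.Reachable (p e).1 (p e).2 := by
    have := isAcyclic_iff_forall_isBridge.1 hA
      (by rw [edgeSet_fromEdgeSet]; exact ⟨he, G.not_isDiag_of_mem_edgeSet e.2⟩)
    rwa [← hp e, isBridge_iff, hp e] at this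
  let c₀ v := decide (H.Reachable (p e).1 v)
  exact ⟨{
    base := c₀
    col f i := if i ≤ d f then c₀ (p f).1 else c₀ (p f).2
    col_zero := by simp
    col_last f := by simp [hdk f]
    col_succ f l hl hlA hfl := by
      rcases lt_trichotomy l (d f) with h | rfl | h
      · rw [if_pos (by omega), if_pos (by omega)]
      · rw [if_pos le_rfl, if_neg (by omega), decide_eq_decide]
        have := hadj f (hdA f hlA) fun hfe => hfl (Prod.ext hfe (hde f hfe))
        exact ⟨fun h => h.trans this.reachable, fun h => h.trans this.symm.reachable⟩
      · rw [if_neg (by omega), if_neg (by omega)]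
    col_ne := by simp [hde e rfl, c₀, hbridge] }⟩

end SeparatingColoring

theorem isAcyclic_fromEdgeSet_of_forall_pathEdge_mem (hk : 2 ≤ k)
    (hp : ∀ e : G.edgeSet, s((p e).1, (p e).2) = e) {A : Set (Sym2 V)}
    (hA : (fromEdgeSet A).IsAcyclic) {A' : Set (Sym2 (V ⊕ (G.edgeSet × Fin (k - 1))))}
    (hA'E : A' ⊆ (stretchGraph G k p).edgeSet)
    (hA' : ∀ e : G.edgeSet, (∀ i < k, pathEdge G k p e i ∈ A') → (e : Sym2 V) ∈ A) :
    (fromEdgeSet A').IsAcyclic := by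
  have hne e := fst_ne_snd_of_mk_eq (hp e)
  refine isAcyclic_of_forall_exists_map_isDiag fun z hz => ?_
  rw [edgeSet_fromEdgeSet] at hz
  obtain ⟨e, j, hj, rfl⟩ := (mem_edgeSet_stretchGraph hk hne).1 (hA'E hz.1)
  obtain ⟨c⟩ : Nonempty (SeparatingColoring k p A' e j) := by
    by_cases he : (e : Sym2 V) ∈ A
    · exact SeparatingColoring.nonempty_of_mem hp hA hA' he hj
    · obtain ⟨j', hj', hj'A⟩ : ∃ j' < k, pathEdge G k p e j' ∉ A' := by
        by_contra! h
        exact he (hA' e h)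
      exact SeparatingColoring.nonempty_of_pathEdge_notMem hj hj'
        (by rintro rfl; exact hj'A hz.1) hj'A
  refine ⟨c.toFun, fun z' hz' hz'e => c.map_isDiag hk hne hA'E ?_ hz'e, c.not_map_isDiag hj⟩
  rw [edgeSet_fromEdgeSet] at hz'
  exact hz'.1

variable [Fintype V]

theorem mem_stretchProj (hk : 2 ≤ k) {A' : Finset (Sym2 (V ⊕ (G.edgeSet × Fin (k - 1))))}
    {z : Sym2 V} :
    z ∈ stretchProj G k hk p A' ↔ ∃ e : G.edgeSet, pathEdges G k hk p e ⊆ A' ∧ (e : Sym2 V) = z := by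
  simp [stretchProj, Finset.bind_def, Finset.pure_def]

theorem stretchProj_eq_iff (hk : 2 ≤ k) {A : Finset (Sym2 V)} (hA : A ⊆ G.edgeFinset)
    {A' : Finset (Sym2 (V ⊕ (G.edgeSet × Fin (k - 1))))} :
    stretchProj G k hk p A' = A ↔
      ∀ e : G.edgeSet, (pathEdges G k hk p e ⊆ A' ↔ (e : Sym2 V) ∈ A) := by
  simp only [Finset.ext_iff, mem_stretchProj]
  constructor
  · intro h e
    rw [← h]
    exact ⟨fun he => ⟨e, he, rfl⟩, fun ⟨f, hf, hfe⟩ => Subtype.ext hfe ▸ hf⟩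
  · refine fun h z => ⟨?_, fun hz => ⟨⟨z, mem_edgeFinset.1 (hA hz)⟩, (h _).2 hz, rfl⟩⟩
    rintro ⟨e, he, rfl⟩
    exact (h e).1 he

theorem isForestEdgeSet_and_stretchProj_eq_iff (hk : 2 ≤ k)
    (hp : ∀ e : G.edgeSet, s((p e).1, (p e).2) = e) {A : Finset (Sym2 V)}
    (hA : A ⊆ G.edgeFinset) (hacyc : (fromEdgeSet (A : Set (Sym2 V))).IsAcyclic)
    {A' : Finset (Sym2 (V ⊕ (G.edgeSet × Fin (k - 1))))}
    (hA'E : A' ⊆ (stretchGraph G k p).edgeFinset) :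
    IsForestEdgeSet A' ∧ stretchProj G k hk p A' = A ↔
      ∀ e, (A' ∩ pathEdges G k hk p e = pathEdges G k hk p e ↔ (e : Sym2 V) ∈ A) := by
  simp only [inter_eq_right, ← stretchProj_eq_iff hk hA, and_iff_right_iff_imp]
  refine fun hproj => isAcyclic_fromEdgeSet_of_forall_pathEdge_mem hk hp hacyc ?_ fun e he => ?_
  · rwa [← coe_subset, coe_edgeFinset] at hA'E
  · rw [mem_coe, ← (stretchProj_eq_iff hk hA).1 hproj e, pathEdges_eq_image, image_subset_iff]
    exact fun i hi => he i (mem_range.1 hi)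

end Stretch

/-- Let `G` have `m` edges, let `k ≥ 2`, let `G'` be the `k`-stretch of `G`, and let
`A ⊆ E(G)` be acyclic.  Then, as polynomials in `w`,
`Σ_{A' ∈ 𝔽(G'), φ(A') = A} w^{|A'|} = w^{k·|A|} · ((w+1)^k − w^k)^{m−|A|}`. -/
theorem stretch_fiber_generating_polynomial {V : Type*} [Fintype V] (G : SimpleGraph V)
    (k : ℕ) (hk : 2 ≤ k) (p : G.edgeSet → V × V)
    (hp : ∀ e : G.edgeSet, s((p e).1, (p e).2) = (e : Sym2 V))
    (A : Finset (Sym2 V)) (hA : A ⊆ G.edgeFinset)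
    (hacyc : (SimpleGraph.fromEdgeSet (A : Set (Sym2 V))).IsAcyclic) :
    ∑ A' ∈ (stretchGraph G k p).edgeFinset.powerset.filter
        (fun A' => IsForestEdgeSet A' ∧ stretchProj G k hk p A' = A),
      (Polynomial.X : Polynomial ℤ) ^ A'.card
    = Polynomial.X ^ (k * A.card) *
        ((Polynomial.X + 1) ^ k - Polynomial.X ^ k) ^ (G.edgeFinset.card - A.card) := by
  have hne e := fst_ne_snd_of_mk_eq (hp e)
  rw [filter_congr fun A' hA' => isForestEdgeSet_and_stretchProj_eq_iff hk hp hA hacyc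
    (mem_powerset.1 hA'), edgeFinset_stretchGraph hk hne]
  calc _ = ∏ e : G.edgeSet, ∑ T ∈ (pathEdges G k hk p e).powerset.filter
          (fun T => T = pathEdges G k hk p e ↔ (e : Sym2 V) ∈ A), Polynomial.X ^ T.card := by
        convert sum_filter_powerset_biUnion _ (pairwise_disjoint_pathEdges hk hne)
          (fun e T => T = pathEdges G k hk p e ↔ (e : Sym2 V) ∈ A) _
    _ = ∏ e : G.edgeSet, if (e : Sym2 V) ∈ A then Polynomial.X ^ k
          else (Polynomial.X + 1) ^ k - Polynomial.X ^ k := by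
        simp_rw [sum_filter_powerset_eq_iff, card_pathEdges hk (hne _)]
    _ = _ := by
        rw [← prod_subtype G.edgeFinset (fun _ => mem_edgeFinset) fun e => if e ∈ A then _ else _,
          prod_ite_mem_of_subset hA, pow_mul]
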